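/- arXiv:2002.02228 — 2 statements merged into one kernel-verified Lean document; each statement's English description precedes it below -/
import Mathlib

section
/- The query answering and rewriting procedure Q-AR is a sound inference system: every derivation step of Q-AR (the rules of T-Inf together with the renaming T-Trans) transforms a clause set into an equisatisfiable clause set; in particular, if Q-AR derives the empty clause from a clause set N, then N is unsatisfiable. -/
/-!
Common formalization of first-order clausal logic (without equality), following
"Resolution-based query answering and rewriting for the (loosely) guarded fragment".
-/

set_option linter.unusedVariables false

namespace QGF

/-- Symbols: function symbols, constant symbols and predicate symbols, each indexed by ℕ. -/
inductive Head : Type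
  | fn : ℕ → Head
  | cn : ℕ → Head
  | pr : ℕ → Head
  deriving DecidableEq

/-- First-order terms.  A constant `c` is represented as `Term.app (Head.cn c) []`. -/
inductive Term : Type
  | var : ℕ → Term
  | app : Head → List Term → Term

namespace Term

def isVar : Term → Prop
  | var _ => True
  | _ => False

def isConst : Term → Prop
  | app (.cn _) [] => True
  | _ => False

/-- A compound term is a term that is neither a variable nor a constant. -/
def isCompound (t : Term) : Prop := ¬ t.isVar ∧ ¬ t.isConst

/-- Occurrence of a variable in a term. -/
inductive HasVar : Term → ℕ → Prop
  | var (x : ℕ) : HasVar (var x) x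
  | app {h : Head} {ts : List Term} {x : ℕ} {t : Term} :
      t ∈ ts → HasVar t x → HasVar (app h ts) x

def vars (t : Term) : Set ℕ := {x | t.HasVar x}

/-- Subterm relation. -/
inductive SubtermOf : Term → Term → Prop
  | refl (t : Term) : SubtermOf t t
  | app {s : Term} {h : Head} {ts : List Term} {t : Term} :
      t ∈ ts → SubtermOf s t → SubtermOf s (app h ts)

/-- Depth of a term: variables and constants have depth 0. -/
def depth : Term → ℕ
  | var _ => 0
  | app _ ts => (ts.attach.map fun t => depth t.1 + 1).foldr max 0
  decreasing_by
    have := List.sizeOf_lt_of_mem t.2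
    simp only [Term.app.sizeOf_spec]
    omega

/-- Applying a substitution to a term. -/
def subst (σ : ℕ → Term) : Term → Term
  | var x => σ x
  | app h ts => app h (ts.attach.map fun t => subst σ t.1)
  decreasing_by
    have := List.sizeOf_lt_of_mem t.2
    simp only [Term.app.sizeOf_spec]
    omega

def isGround (t : Term) : Prop := t.vars = ∅

/-- An argument is flat if it is a variable or a constant. -/
def flatArg (t : Term) : Prop := t.isVar ∨ t.isConst

/-- An argument is simple if it is a variable, a constant, or a compound term all of
whose arguments are variables or constants. -/
def simpleArg : Term → Prop
  | var _ => True
  | app _ ts => ∀ u ∈ ts, flatArg u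

end Term

/-- Substitutions. -/
abbrev Subst := ℕ → Term

/-- Atoms. -/
structure Atom where
  pred : ℕ
  args : List Term

namespace Atom

def subst (σ : Subst) (a : Atom) : Atom := ⟨a.pred, a.args.map (Term.subst σ)⟩

def vars (a : Atom) : Set ℕ := {x | ∃ t ∈ a.args, x ∈ t.vars}

def flat (a : Atom) : Prop := ∀ t ∈ a.args, t.flatArg

def simple (a : Atom) : Prop := ∀ t ∈ a.args, t.simpleArg

def ground (a : Atom) : Prop := a.vars = ∅

/-- An atom `P(t₁,…,tₙ)` viewed as the term with head the predicate symbol `P`. -/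
def toTerm (a : Atom) : Term := .app (.pr a.pred) a.args

end Atom

/-- Literals. -/
structure Lit where
  pos : Bool
  atom : Atom

def Lit.mkPos (a : Atom) : Lit := ⟨true, a⟩
def Lit.mkNeg (a : Atom) : Lit := ⟨false, a⟩

namespace Lit

def subst (σ : Subst) (L : Lit) : Lit := ⟨L.pos, L.atom.subst σ⟩

def vars (L : Lit) : Set ℕ := L.atom.vars

def ground (L : Lit) : Prop := L.vars = ∅

def flat (L : Lit) : Prop := L.atom.flat

def simple (L : Lit) : Prop := L.atom.simple

/-- Occurrence of a term in a literal (as a subterm of an argument). -/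
def hasTerm (L : Lit) (t : Term) : Prop := ∃ u ∈ L.atom.args, t.SubtermOf u

def hasCompound (L : Lit) : Prop := ∃ t, L.hasTerm t ∧ t.isCompound

/-- A literal is covering if every compound term occurring in it contains exactly the
variables of the literal. -/
def covering (L : Lit) : Prop := ∀ t, L.hasTerm t → t.isCompound → t.vars = L.vars

end Lit

/-- A clause is a (multi)set of literals, represented as a list, read disjunctively,
with all variables implicitly universally quantified. -/
abbrev Clause := List Lit

namespace Clause

def subst (σ : Subst) (C : Clause) : Clause := C.map (Lit.subst σ)

def vars (C : Clause) : Set ℕ := {x | ∃ L ∈ C, x ∈ L.vars}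

def ground (C : Clause) : Prop := vars C = ∅

def flat (C : Clause) : Prop := ∀ L ∈ C, L.flat

def simple (C : Clause) : Prop := ∀ L ∈ C, L.simple

def hasTerm (C : Clause) (t : Term) : Prop := ∃ L ∈ C, L.hasTerm t

/-- A clause is covering if every compound term occurring in it contains exactly the
variables of the clause. -/
def covering (C : Clause) : Prop := ∀ t, hasTerm C t → t.isCompound → t.vars = vars C

def hasNegCompound (C : Clause) : Prop := ∃ L ∈ C, L.pos = false ∧ L.hasCompound

def hasCompound (C : Clause) : Prop := ∃ L ∈ C, L.hasCompound

/-- The predicate symbols occurring in a clause. -/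
def preds (C : Clause) : Set ℕ := {p | ∃ L ∈ C, L.atom.pred = p}

/-- The depth of a clause: the maximal depth of a term occurring in it. -/
def depth (C : Clause) : ℕ :=
  (C.map fun L => (L.atom.args.map Term.depth).foldr max 0).foldr max 0

end Clause

/-- `L` is a guard of `C`:  a negative flat literal of `C` containing all variables of `C`. -/
def Lit.isGuardOf (L : Lit) (C : Clause) : Prop :=
  L ∈ C ∧ L.pos = false ∧ L.flat ∧ L.vars = Clause.vars C

/-- Guarded clauses (Definition 3.3). -/
def Clause.guarded (C : Clause) : Prop :=
  Clause.simple C ∧ Clause.covering C ∧ (Clause.ground C ∨ ∃ L : Lit, L.isGuardOf C)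

/-- `G` is a set of loose guards of `C`. -/
def Clause.looseGuardsOf (G : List Lit) (C : Clause) : Prop :=
  (∀ L ∈ G, L ∈ C ∧ L.pos = false ∧ L.flat) ∧
  (∀ x ∈ Clause.vars C, ∃ L ∈ G, x ∈ L.vars) ∧
  (∀ x ∈ Clause.vars C, ∀ y ∈ Clause.vars C, x ≠ y → ∃ L ∈ G, x ∈ L.vars ∧ y ∈ L.vars)

/-- Loosely guarded clauses (Definition 3.3). -/
def Clause.looselyGuarded (C : Clause) : Prop :=
  Clause.simple C ∧ Clause.covering C ∧
    (Clause.ground C ∨ ∃ G : List Lit, Clause.looseGuardsOf G C)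

/-- Query clauses: flat clauses containing only negative literals (Definition 3.2). -/
def Clause.query (C : Clause) : Prop := Clause.flat C ∧ ∀ L ∈ C, L.pos = false

/-! ### Semantics -/

/-- First-order interpretations. -/
structure Interp : Type 1 where
  dom : Type
  nonempty : Nonempty dom
  fn : Head → List dom → dom
  pr : ℕ → List dom → Prop

def Term.eval (I : Interp) (ν : ℕ → I.dom) : Term → I.dom
  | .var x => ν x
  | .app h ts => I.fn h (ts.attach.map fun t => Term.eval I ν t.1)
  decreasing_by
    have := List.sizeOf_lt_of_mem t.2
    simp only [Term.app.sizeOf_spec]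
    omega

def Atom.holds (I : Interp) (ν : ℕ → I.dom) (a : Atom) : Prop :=
  I.pr a.pred (a.args.map (Term.eval I ν))

def Lit.holds (I : Interp) (ν : ℕ → I.dom) (L : Lit) : Prop :=
  if L.pos then L.atom.holds I ν else ¬ L.atom.holds I ν

/-- A clause holds under a valuation if one of its literals does. -/
def Clause.holdsUnder (I : Interp) (ν : ℕ → I.dom) (C : Clause) : Prop :=
  ∃ L ∈ C, L.holds I ν

/-- A clause is true in an interpretation if its universal closure holds. -/
def Clause.trueIn (I : Interp) (C : Clause) : Prop := ∀ ν, Clause.holdsUnder I ν C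

def Interp.models (I : Interp) (N : Set Clause) : Prop := ∀ C ∈ N, Clause.trueIn I C

/-- Satisfiability of a set of clauses. -/
def satisfiable (N : Set Clause) : Prop := ∃ I : Interp, I.models N

/-- Logical consequence:  every model of `N` is a model of `C`. -/
def entails (N : Set Clause) (C : Clause) : Prop :=
  ∀ I : Interp, I.models N → Clause.trueIn I C

/-- A tautology is a clause true in every interpretation. -/
def Tautology (C : Clause) : Prop := ∀ (I : Interp) (ν : ℕ → I.dom), Clause.holdsUnder I ν C

/-- Two clauses are variants if each is an instance of the other. -/
def Variant (C D : Clause) : Prop :=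
  (∃ σ : Subst, Clause.subst σ C = D) ∧ (∃ ρ : Subst, Clause.subst ρ D = C)

/-! ### Unification -/

def Unifies (σ : Subst) (a b : Atom) : Prop := a.subst σ = b.subst σ

/-- Most general unifiers. -/
def IsMGU (σ : Subst) (a b : Atom) : Prop :=
  Unifies σ a b ∧ ∀ θ : Subst, Unifies θ a b → ∃ ρ : Subst, ∀ x, (σ x).subst ρ = θ x

def Lit.unifies (σ : Subst) (L1 L2 : Lit) : Prop := L1.subst σ = L2.subst σ

def Lit.isMGU (σ : Subst) (L1 L2 : Lit) : Prop :=
  Lit.unifies σ L1 L2 ∧ ∀ θ : Subst, Lit.unifies θ L1 L2 → ∃ ρ : Subst, ∀ x, (σ x).subst ρ = θ x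

def UnifiesAll (σ : Subst) (ps : List (Atom × Atom)) : Prop :=
  ∀ p ∈ ps, Atom.subst σ p.1 = Atom.subst σ p.2

/-- Simultaneous most general unifiers. -/
def IsSimMGU (σ : Subst) (ps : List (Atom × Atom)) : Prop :=
  UnifiesAll σ ps ∧ ∀ θ : Subst, UnifiesAll θ ps → ∃ ρ : Subst, ∀ x, (σ x).subst ρ = θ x

/-! ### Condensation, separability -/

/-- `D` is a subclause of `C` (as multisets). -/
def SubClause (D C : Clause) : Prop := (↑D : Multiset Lit) ≤ (↑C : Multiset Lit)

/-- `D` is a condensation of `C`: a proper subclause of `C` which is an instance of `C`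
(up to duplicate literals). -/
def IsCondensation (D C : Clause) : Prop :=
  SubClause D C ∧ D.length < C.length ∧
    ∃ σ : Subst, ∀ L : Lit, L ∈ D ↔ L ∈ Clause.subst σ C

/-- A clause `C ∨ D` is separable into `C` and `D` if both are non-empty and neither
variable set is included in the other. -/
def Separable (C D : Clause) : Prop :=
  C ≠ [] ∧ D ≠ [] ∧ ¬ Clause.vars C ⊆ Clause.vars D ∧ ¬ Clause.vars D ⊆ Clause.vars C

/-- A clause is indecomposable if it cannot be partitioned into two non-empty
variable-disjoint subclauses. -/
def Clause.indecomposable (C : Clause) : Prop :=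
  ¬ ∃ D E : Clause, D ≠ [] ∧ E ≠ [] ∧
      (↑C : Multiset Lit) = (↑D : Multiset Lit) + (↑E : Multiset Lit) ∧
      Clause.vars D ∩ Clause.vars E = ∅

/-- The predicate symbols occurring in a clause set. -/
def SetPreds (N : Set Clause) : Set ℕ := {p | ∃ C ∈ N, p ∈ Clause.preds C}

/-! ### Orderings -/

namespace Head

def rank : Head → ℕ
  | .pr _ => 0
  | .cn _ => 1
  | .fn _ => 2

def idx : Head → ℕ
  | .pr n => n
  | .cn n => n
  | .fn n => n

/-- The precedence: every function symbol is greater than every constant, and every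
constant is greater than every predicate symbol. -/
def prec (g h : Head) : Prop := g.rank < h.rank ∨ (g.rank = h.rank ∧ g.idx < h.idx)

end Head

/-- The lexicographic path ordering on terms induced by the precedence `Head.prec`.
`LpoGT s t` means `s ≻_lpo t`. -/
inductive LpoGT : Term → Term → Prop
  | subRefl {h : Head} {ss : List Term} {t : Term} :
      t ∈ ss → LpoGT (.app h ss) t
  | sub {h : Head} {ss : List Term} {t : Term} (s : Term) :
      s ∈ ss → LpoGT s t → LpoGT (.app h ss) t
  | prec {h g : Head} {ss ts : List Term} :
      Head.prec g h → (∀ t ∈ ts, LpoGT (.app h ss) t) → LpoGT (.app h ss) (.app g ts)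
  | lex {h : Head} {ss ts u ss' ts' : List Term} {s t : Term} :
      ss = u ++ s :: ss' → ts = u ++ t :: ts' → LpoGT s t →
      (∀ t' ∈ ts, LpoGT (.app h ss) t') → LpoGT (.app h ss) (.app h ts)

/-- The induced lexicographic path ordering on literals, where a negative literal is
greater than the corresponding positive literal. -/
def Lit.lpoGT (L1 L2 : Lit) : Prop :=
  LpoGT L1.atom.toTerm L2.atom.toTerm ∨
    (L1.atom.toTerm = L2.atom.toTerm ∧ L1.pos = false ∧ L2.pos = true)

/-- Admissible orderings on literals; `ord L L'` means `L ≻ L'`. -/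
structure Admissible (ord : Lit → Lit → Prop) : Prop where
  trans : ∀ {a b c : Lit}, ord a b → ord b c → ord a c
  irrefl : ∀ a : Lit, ¬ ord a a
  totalGround : ∀ a b : Lit, a.ground → b.ground → a = b ∨ ord a b ∨ ord b a
  wfGround : WellFounded fun a b : Lit => a.ground ∧ b.ground ∧ ord b a
  liftable : ∀ (a b : Lit) (σ : Subst), ord a b → ord (a.subst σ) (b.subst σ)
  negGtPos : ∀ a : Atom, a.ground → ord (Lit.mkNeg a) (Lit.mkPos a)
  negCompat : ∀ a b : Atom, a.ground → b.ground →
    ord (Lit.mkPos b) (Lit.mkPos a) → ord (Lit.mkPos b) (Lit.mkNeg a)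

/-- The multiset extension of a literal ordering to clauses; `ClauseGT ord C D` means
`C ≻ D`. -/
def ClauseGT (ord : Lit → Lit → Prop) (C D : Clause) : Prop :=
  ∃ X Y Z : Multiset Lit,
    (↑C : Multiset Lit) = Z + X ∧ (↑D : Multiset Lit) = Z + Y ∧ X ≠ 0 ∧
      ∀ y ∈ Y, ∃ x ∈ X, ord x y

/-- `L` is maximal with respect to a clause `C` (`C` not necessarily containing `L`):
some ground instance of `L` is not smaller than the corresponding instances of the
literals of `C`. -/
def maxIn (ord : Lit → Lit → Prop) (L : Lit) (C : Clause) : Prop :=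
  ∃ σ : Subst, Lit.ground (L.subst σ) ∧ Clause.ground (Clause.subst σ C) ∧
    ∀ L' ∈ C, ¬ ord (Lit.subst σ L') (Lit.subst σ L)

/-- `L` is strictly maximal with respect to a clause `C`. -/
def strictMaxIn (ord : Lit → Lit → Prop) (L : Lit) (C : Clause) : Prop :=
  ∃ σ : Subst, Lit.ground (L.subst σ) ∧ Clause.ground (Clause.subst σ C) ∧
    ∀ L' ∈ C, ord (Lit.subst σ L) (Lit.subst σ L')

/-! ### Redundancy -/

def GroundInstanceOf (D C : Clause) : Prop := (∃ σ : Subst, D = Clause.subst σ C) ∧ Clause.ground D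

/-- Redundancy of a clause with respect to a clause set `N`:  every ground instance is
entailed by finitely many smaller ground instances of clauses of `N`. -/
def redundantClause (ord : Lit → Lit → Prop) (N : Set Clause) (C : Clause) : Prop :=
  ∀ D : Clause, GroundInstanceOf D C →
    ∃ S : Finset Clause, (∀ E ∈ S, ∃ C' ∈ N, GroundInstanceOf E C') ∧
      entails (↑S) D ∧ ∀ E ∈ S, ClauseGT ord D E

/-- An inference is redundant in `N` if a premise is redundant, or its conclusion is
redundant in `N` or belongs to `N`. -/
def RedundantInference (ord : Lit → Lit → Prop) (N : Set Clause)
    (premises : List Clause) (concl : Clause) : Prop :=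
  (∃ p ∈ premises, redundantClause ord N p) ∨ redundantClause ord N concl ∨ concl ∈ N

/-! ### Selection and eligibility -/

/-- Selection functions: select a set of negative literals of a clause. -/
def SelFn := Clause → Set Lit

def SelOK (sel : SelFn) : Prop := ∀ C : Clause, ∀ L ∈ sel C, L ∈ C ∧ L.pos = false

/-- A literal is eligible if it is selected, or nothing is selected and it is maximal. -/
def Eligible (ord : Lit → Lit → Prop) (sel : SelFn) (C : Clause) (L : Lit) : Prop :=
  (sel C = ∅ ∧ L ∈ C ∧ maxIn ord L C) ∨ L ∈ sel C

/-- Eligibility under the refinement T-Refine (Algorithm 1), in the cases not depending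
on side premises:  maximal literals for ground clauses and clauses with positive
compound terms, a selected negative compound-term literal, or a selected guard. -/
def EligibleTR (C : Clause) (L : Lit) : Prop :=
  L ∈ C ∧
    ((Clause.ground C ∧ maxIn Lit.lpoGT L C) ∨
     (¬ Clause.ground C ∧ Clause.hasNegCompound C ∧ L.pos = false ∧ L.hasCompound) ∨
     (¬ Clause.ground C ∧ ¬ Clause.hasNegCompound C ∧ Clause.hasCompound C ∧
        maxIn Lit.lpoGT L C) ∨
     (¬ Clause.ground C ∧ ¬ Clause.hasCompound C ∧ L.isGuardOf C))

/-! ### Top-variable resolution -/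

/-- `x` is a top variable of the negative atoms `A i` with respect to the candidate
unifier `σ'`:  the depth of `σ' x` is maximal. -/
def IsTopVar (n : ℕ) (A : Fin n → Atom) (σ' : Subst) (x : ℕ) : Prop :=
  (∃ i, x ∈ (A i).vars) ∧
    ∀ y : ℕ, (∃ i, y ∈ (A i).vars) → (σ' y).depth ≤ (σ' x).depth

/-- The data of an application of the top-variable resolution rule TRes:
main premise `¬A₁ ∨ … ∨ ¬Aₙ ∨ D`,  side premises `Bᵢ ∨ Dᵢ`,
`σ'` a simultaneous mgu of all `n` pairs used to compute top variables, and
`σ` a simultaneous mgu of the first `m` (top-variable) pairs. -/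
structure TResApp where
  n : ℕ
  m : ℕ
  A : Fin n → Atom
  B : Fin n → Atom
  Ds : Fin n → Clause
  D : Clause
  σ' : Subst
  σ : Subst

namespace TResApp

def mainPremise (t : TResApp) : Clause :=
  (List.ofFn fun i => Lit.mkNeg (t.A i)) ++ t.D

def sidePremise (t : TResApp) (i : Fin t.n) : Clause :=
  Lit.mkPos (t.B i) :: t.Ds i

def sidePremises (t : TResApp) : List Clause := List.ofFn t.sidePremise

def resolvent (t : TResApp) : Clause :=
  Clause.subst t.σ
    ((((List.finRange t.n).filter fun i => i.1 < t.m).flatMap t.Ds) ++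
     (((List.finRange t.n).filter fun i => t.m ≤ i.1).map fun i => Lit.mkNeg (t.A i)) ++
     t.D)

/-- Side conditions of the TRes rule. -/
def wf (ord : Lit → Lit → Prop) (t : TResApp) : Prop :=
  0 < t.m ∧ t.m ≤ t.n ∧
  (∀ L ∈ t.D, L.pos = true) ∧
  IsSimMGU t.σ' ((List.finRange t.n).map fun i => (t.A i, t.B i)) ∧
  IsSimMGU t.σ (((List.finRange t.n).filter fun i => i.1 < t.m).map fun i => (t.A i, t.B i)) ∧
  (∀ i : Fin t.n, i.1 < t.m ↔ ∃ x, IsTopVar t.n t.A t.σ' x ∧ x ∈ (t.A i).vars) ∧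
  (∀ i, strictMaxIn ord (Lit.mkPos (t.B i)) (t.Ds i)) ∧
  (∀ i, Clause.vars (t.sidePremise i) ∩ Clause.vars t.mainPremise = ∅) ∧
  (∀ i j, i ≠ j → Clause.vars (t.sidePremise i) ∩ Clause.vars (t.sidePremise j) = ∅)

end TResApp

/-! ### The generating inferences of T-Inf -/

/-- The conclusion-generating inferences of the top-variable inference system T-Inf:
ordered resolution with selection (Res), ordered factoring (Fact), and top-variable
resolution (TRes). `TInfInf ord sel ps c` means `c` is the conclusion of an inference
with premises `ps`. -/
inductive TInfInf (ord : Lit → Lit → Prop) (sel : SelFn) : List Clause → Clause → Prop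
  | res {B A : Atom} {D1 D : Clause} {σ : Subst} :
      IsMGU σ A B →
      sel (Lit.mkPos B :: D1) = ∅ →
      strictMaxIn ord (Lit.mkPos B) D1 →
      Eligible ord sel (Lit.mkNeg A :: D) (Lit.mkNeg A) →
      Clause.vars (Lit.mkPos B :: D1) ∩ Clause.vars (Lit.mkNeg A :: D) = ∅ →
      TInfInf ord sel [Lit.mkPos B :: D1, Lit.mkNeg A :: D] (Clause.subst σ (D1 ++ D))
  | fact {A1 A2 : Atom} {C : Clause} {σ : Subst} :
      IsMGU σ A1 A2 →
      sel (C ++ [Lit.mkPos A1, Lit.mkPos A2]) = ∅ →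
      maxIn ord (Lit.mkPos A1) (C ++ [Lit.mkPos A2]) →
      TInfInf ord sel [C ++ [Lit.mkPos A1, Lit.mkPos A2]] (Clause.subst σ (C ++ [Lit.mkPos A1]))
  | tres (t : TResApp) :
      t.wf ord →
      (∀ i, sel (t.sidePremise i) = ∅) →
      (∀ i : Fin t.n, i.1 < t.m → Lit.mkNeg (t.A i) ∈ sel t.mainPremise) →
      TInfInf ord sel (t.sidePremises ++ [t.mainPremise]) t.resolvent

/-- `N` is saturated up to redundancy with respect to the inference system `inf`:
every inference from non-redundant premises of `N` is redundant in `N`. -/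
def SaturatedUpToRedundancy (ord : Lit → Lit → Prop)
    (inf : List Clause → Clause → Prop) (N : Set Clause) : Prop :=
  ∀ (ps : List Clause) (c : Clause), inf ps c → (∀ p ∈ ps, p ∈ N) →
    RedundantInference ord N ps c


/-! ### Surface literals, chained and isolated variables of query clauses -/

/-- `L` is a surface literal of `Q`: no other literal of `Q` has a strictly larger
variable set. -/
def SurfaceLit (Q : Clause) (L : Lit) : Prop :=
  L ∈ Q ∧ ∀ L' ∈ Q, ¬ (L.vars ⊂ L'.vars)

/-- `x` is a chained variable of `Q`: it occurs in two distinct surface literals with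
different, mutually non-inclusive variable sets. -/
def ChainedVar (Q : Clause) (x : ℕ) : Prop :=
  ∃ L L' : Lit, SurfaceLit Q L ∧ SurfaceLit Q L' ∧ L ≠ L' ∧
    ¬ L.vars ⊆ L'.vars ∧ ¬ L'.vars ⊆ L.vars ∧ x ∈ L.vars ∧ x ∈ L'.vars

/-- `x` is an isolated variable of `Q`: a variable of `Q` that is not chained. -/
def IsolatedVar (Q : Clause) (x : ℕ) : Prop := x ∈ Clause.vars Q ∧ ¬ ChainedVar Q x

/-- A query clause is isolated-only if all its variables are isolated. -/
def Clause.isolatedOnly (Q : Clause) : Prop := ∀ x ∈ Clause.vars Q, ¬ ChainedVar Q x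

/-- A query clause is chained-only if all its variables are chained. -/
def Clause.chainedOnly (Q : Clause) : Prop := ∀ x ∈ Clause.vars Q, ChainedVar Q x

/-! ### The inferences of Q-AR -/

/-- The inferences of Q-AR: the T-Inf inferences together with the separation
inferences (Sep) and the T-Trans renaming inferences, both introducing fresh,
smaller definer predicate symbols. -/
inductive QARInf (ord : Lit → Lit → Prop) (sel : SelFn) : List Clause → Clause → Prop
  | tinf {ps : List Clause} {c : Clause} : TInfInf ord sel ps c → QARInf ord sel ps c
  | sepL {C D : Clause} {ds : ℕ} {xs : List ℕ} :
      Separable C D → {x | x ∈ xs} = Clause.vars C ∩ Clause.vars D →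
      ds ∉ Clause.preds (C ++ D) →
      QARInf ord sel [C ++ D] (Lit.mkNeg ⟨ds, xs.map Term.var⟩ :: C)
  | sepR {C D : Clause} {ds : ℕ} {xs : List ℕ} :
      Separable C D → {x | x ∈ xs} = Clause.vars C ∩ Clause.vars D →
      ds ∉ Clause.preds (C ++ D) →
      QARInf ord sel [C ++ D] (Lit.mkPos ⟨ds, xs.map Term.var⟩ :: D)
  | ttransDef {E F : Clause} {d : ℕ} {xs : List ℕ} :
      {x | x ∈ xs} = Clause.vars E → d ∉ Clause.preds (F ++ E) →
      QARInf ord sel [F ++ E] (Lit.mkPos ⟨d, xs.map Term.var⟩ :: E)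
  | ttransQ {E F : Clause} {d : ℕ} {xs : List ℕ} :
      {x | x ∈ xs} = Clause.vars E → d ∉ Clause.preds (F ++ E) →
      QARInf ord sel [F ++ E] (F ++ [Lit.mkNeg ⟨d, xs.map Term.var⟩])

/-! ### Q-AR as a transition system on clause sets -/

/-- A single derivation step of the procedure Q-AR on clause sets: adding a
Res/TRes/Fact conclusion, replacement by a condensation, deletion of tautologies and
variants, separation (Sep) and the renaming T-Trans (both with fresh definer
predicate symbols). -/
inductive QARStep : Set Clause → Set Clause → Prop
  | res {N : Set Clause} {A B : Atom} {D1 D : Clause} {σ : Subst} :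
      (Lit.mkPos B :: D1) ∈ N → (Lit.mkNeg A :: D) ∈ N → IsMGU σ A B →
      QARStep N (insert (Clause.subst σ (D1 ++ D)) N)
  | tres {N : Set Clause} (t : TResApp) :
      (∀ i, t.sidePremise i ∈ N) → t.mainPremise ∈ N →
      (∀ i : Fin t.n, i.1 < t.m → Atom.subst t.σ (t.A i) = Atom.subst t.σ (t.B i)) →
      QARStep N (insert t.resolvent N)
  | fact {N : Set Clause} {A1 A2 : Atom} {C : Clause} {σ : Subst} :
      (C ++ [Lit.mkPos A1, Lit.mkPos A2]) ∈ N → IsMGU σ A1 A2 →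
      QARStep N (insert (Clause.subst σ (C ++ [Lit.mkPos A1])) N)
  | conden {N : Set Clause} {C D : Clause} :
      C ∈ N → IsCondensation D C → QARStep N (insert D (N \ {C}))
  | deleteTaut {N : Set Clause} {C : Clause} :
      C ∈ N → Tautology C → QARStep N (N \ {C})
  | deleteVariant {N : Set Clause} {C C' : Clause} :
      C ∈ N → C' ∈ N → C ≠ C' → Variant C C' → QARStep N (N \ {C})
  | sep {N : Set Clause} {C D : Clause} {ds : ℕ} {xs : List ℕ} :
      (C ++ D) ∈ N → Separable C D → {x | x ∈ xs} = Clause.vars C ∩ Clause.vars D →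
      ds ∉ SetPreds N →
      QARStep N (insert (Lit.mkNeg ⟨ds, xs.map Term.var⟩ :: C)
        (insert (Lit.mkPos ⟨ds, xs.map Term.var⟩ :: D) (N \ {C ++ D})))
  | ttrans {N : Set Clause} {E F : Clause} {d : ℕ} {xs : List ℕ} :
      (F ++ E) ∈ N → {x | x ∈ xs} = Clause.vars E → d ∉ SetPreds N →
      QARStep N (insert (F ++ [Lit.mkNeg ⟨d, xs.map Term.var⟩])
        (insert (Lit.mkPos ⟨d, xs.map Term.var⟩ :: E) (N \ {F ++ E})))

/-!
Res, TRes and Fact add a clause entailed by the current set, and condensation and deletion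
remove a clause entailed by the clauses that remain, so all of them preserve models. Sep and
T-Trans replace `C ∨ D` by `¬d(x̄) ∨ C` and `d(x̄) ∨ D` with `d` fresh. Resolving these on `d`
gives back `C ∨ D`; conversely, a model of `C ∨ D` becomes a model of the new clauses once
`d(ā)` is read as "`C` holds under every valuation sending `x̄` to `ā`". Indeed, as `x̄` contains
the variables shared by `C` and `D`, a valuation refuting `D` glues with any such valuation
into one that must satisfy `C`. The same gluing shows that a clause whose parts are
variable-disjoint is true iff one of its parts is, which is the soundness of Split.
-/

namespace Term

theorem subst_app (σ : Subst) (h : Head) (ts : List Term) :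
    (app h ts).subst σ = app h (ts.map (subst σ)) := by
  rw [subst, List.attach_map_val]

theorem eval_app (I : Interp) (ν : ℕ → I.dom) (h : Head) (ts : List Term) :
    (app h ts).eval I ν = I.fn h (ts.map (eval I ν)) := by
  rw [eval, List.attach_map_val]

theorem eval_subst (I : Interp) (ν : ℕ → I.dom) (σ : Subst) :
    ∀ t : Term, (t.subst σ).eval I ν = t.eval I fun x => (σ x).eval I ν
  | var x => by rw [subst, eval]
  | app h ts => by
    rw [subst_app, eval_app, eval_app, List.map_map]
    exact congrArg _ (List.map_congr_left fun t _ => eval_subst I ν σ t)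

theorem eval_congr (I : Interp) {ν ν' : ℕ → I.dom} :
    ∀ t : Term, (∀ x ∈ t.vars, ν x = ν' x) → t.eval I ν = t.eval I ν'
  | var x, h => by rw [eval, eval]; exact h x (.var x)
  | app h ts, hν => by
    rw [eval_app, eval_app]
    exact congrArg _ (List.map_congr_left fun t ht =>
      eval_congr I t fun x hx => hν x (.app ht hx))

end Term

-- Reducible, so that a valuation in `I.dom` is one in `(I.updatePr p f).dom` for `rw`.
abbrev Interp.updatePr (I : Interp) (p : ℕ) (f : List I.dom → Prop) : Interp :=
  { I with pr := Function.update I.pr p f }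

theorem Term.eval_updatePr (I : Interp) (p : ℕ) (f : List I.dom → Prop) (ν : ℕ → I.dom) :
    ∀ t : Term, t.eval (I.updatePr p f) ν = t.eval I ν
  | var x => by rw [eval, eval]
  | app h ts => by
    rw [eval_app, eval_app]
    exact congrArg _ (List.map_congr_left fun t _ => eval_updatePr I p f ν t)

section Semantics

variable {I : Interp} {ν ν' : ℕ → I.dom}

theorem Atom.holds_subst (σ : Subst) (a : Atom) :
    (a.subst σ).holds I ν ↔ a.holds I fun x => (σ x).eval I ν := by
  rw [Atom.holds, Atom.holds, Atom.subst, List.map_map]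
  exact iff_of_eq (congrArg _ (List.map_congr_left fun t _ => Term.eval_subst I ν σ t))

theorem Atom.holds_iff_of_unifies {σ : Subst} {a b : Atom} (h : Unifies σ a b) :
    (a.holds I fun x => (σ x).eval I ν) ↔ b.holds I fun x => (σ x).eval I ν := by
  rw [← Atom.holds_subst, ← Atom.holds_subst, h]

theorem Atom.holds_congr (a : Atom) (h : ∀ x ∈ a.vars, ν x = ν' x) :
    a.holds I ν ↔ a.holds I ν' := by
  rw [Atom.holds, Atom.holds, List.map_congr_left fun t ht =>
    Term.eval_congr I t fun x hx => h x ⟨t, ht, hx⟩]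

theorem Atom.holds_updatePr_of_ne (f : List I.dom → Prop) {p : ℕ} {a : Atom}
    (hp : a.pred ≠ p) : a.holds (I.updatePr p f) ν ↔ a.holds I ν := by
  simp only [Atom.holds, Function.update_of_ne hp, funext (Term.eval_updatePr I p f ν)]

theorem Atom.holds_updatePr_self (f : List I.dom → Prop) (p : ℕ) (xs : List ℕ) :
    Atom.holds (I.updatePr p f) ν ⟨p, xs.map Term.var⟩ ↔ f (xs.map ν) := by
  unfold Atom.holds
  rw [show (I.updatePr p f).pr p = f from Function.update_self _ _ _, List.map_map]
  exact iff_of_eq (congrArg f (List.map_congr_left fun x _ => Term.eval.eq_1 (I.updatePr p f) ν x))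

@[simp]
theorem Lit.holds_mkPos (a : Atom) : (Lit.mkPos a).holds I ν ↔ a.holds I ν := by
  simp [Lit.holds, Lit.mkPos]

@[simp]
theorem Lit.holds_mkNeg (a : Atom) : (Lit.mkNeg a).holds I ν ↔ ¬ a.holds I ν := by
  simp [Lit.holds, Lit.mkNeg]

theorem Lit.holds_subst (σ : Subst) (L : Lit) :
    (L.subst σ).holds I ν ↔ L.holds I fun x => (σ x).eval I ν := by
  cases L with | mk pos a => cases pos <;> simp [Lit.holds, Lit.subst, Atom.holds_subst]

theorem Lit.holds_congr (L : Lit) (h : ∀ x ∈ L.vars, ν x = ν' x) :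
    L.holds I ν ↔ L.holds I ν' := by
  cases L with | mk pos a => cases pos <;> simp [Lit.holds, Atom.holds_congr a h]

theorem Lit.holds_updatePr_of_ne (f : List I.dom → Prop) {p : ℕ} {L : Lit}
    (hp : L.atom.pred ≠ p) : L.holds (I.updatePr p f) ν ↔ L.holds I ν := by
  cases L with
  | mk pos a => cases pos <;> simp [Lit.holds, Atom.holds_updatePr_of_ne f hp]

@[simp]
theorem Clause.not_holdsUnder_nil : ¬ Clause.holdsUnder I ν [] := by
  simp [Clause.holdsUnder]

@[simp]
theorem Clause.holdsUnder_cons (L : Lit) (C : Clause) :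
    Clause.holdsUnder I ν (L :: C) ↔ L.holds I ν ∨ C.holdsUnder I ν := by
  simp [Clause.holdsUnder]

@[simp]
theorem Clause.holdsUnder_append (C D : Clause) :
    (C ++ D).holdsUnder I ν ↔ C.holdsUnder I ν ∨ D.holdsUnder I ν := by
  simp only [Clause.holdsUnder, List.mem_append, or_and_right, exists_or]

theorem Clause.holdsUnder.mono {C D : Clause} (hCD : ∀ L ∈ C, L ∈ D)
    (hC : C.holdsUnder I ν) : D.holdsUnder I ν :=
  let ⟨L, hL, h⟩ := hC; ⟨L, hCD L hL, h⟩

theorem Clause.holdsUnder_subst (σ : Subst) (C : Clause) :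
    (Clause.subst σ C).holdsUnder I ν ↔ C.holdsUnder I fun x => (σ x).eval I ν := by
  simp [Clause.holdsUnder, Clause.subst, Lit.holds_subst]

theorem Clause.holdsUnder_congr (C : Clause) (h : ∀ x ∈ Clause.vars C, ν x = ν' x) :
    C.holdsUnder I ν ↔ C.holdsUnder I ν' :=
  exists_congr fun L => and_congr_right fun hL => L.holds_congr fun x hx => h x ⟨L, hL, hx⟩

theorem Clause.holdsUnder_updatePr (f : List I.dom → Prop) {p : ℕ} {C : Clause}
    (hp : p ∉ Clause.preds C) : C.holdsUnder (I.updatePr p f) ν ↔ C.holdsUnder I ν :=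
  exists_congr fun L => and_congr_right fun hL =>
    Lit.holds_updatePr_of_ne f fun h => hp ⟨L, hL, h⟩

theorem Clause.trueIn_subst {C : Clause} (hC : C.trueIn I) (σ : Subst) :
    (Clause.subst σ C).trueIn I := fun ν =>
  (Clause.holdsUnder_subst σ C).mpr (hC _)

theorem Clause.trueIn_updatePr (f : List I.dom → Prop) {p : ℕ} {C : Clause}
    (hp : p ∉ Clause.preds C) : C.trueIn (I.updatePr p f) ↔ C.trueIn I :=
  forall_congr' fun _ => Clause.holdsUnder_updatePr f hp

theorem Clause.not_trueIn_nil : ¬ Clause.trueIn I [] := fun h =>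
  Clause.not_holdsUnder_nil (h fun _ => Classical.choice I.nonempty)

end Semantics

theorem Clause.preds_append (C D : Clause) :
    Clause.preds (C ++ D) = Clause.preds C ∪ Clause.preds D := by
  ext p
  simp only [Clause.preds, List.mem_append, Set.mem_ofPred_eq, Set.mem_union, or_and_right,
    exists_or]

section Valuations

variable {I : Interp} {C D : Clause} [DecidablePred (· ∈ Clause.vars C)]

theorem Clause.holdsUnder_piecewise_left (ν ν' : ℕ → I.dom) :
    C.holdsUnder I ((Clause.vars C).piecewise ν ν') ↔ C.holdsUnder I ν :=
  C.holdsUnder_congr fun _ hx => Set.piecewise_eq_of_mem _ _ _ hx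

theorem Clause.holdsUnder_piecewise_right {ν ν' : ℕ → I.dom}
    (h : ∀ x ∈ Clause.vars C ∩ Clause.vars D, ν x = ν' x) :
    D.holdsUnder I ((Clause.vars C).piecewise ν ν') ↔ D.holdsUnder I ν' := by
  refine D.holdsUnder_congr fun x hx => ?_
  by_cases hxC : x ∈ Clause.vars C
  · rw [Set.piecewise_eq_of_mem _ _ _ hxC]
    exact h x ⟨hxC, hx⟩
  · exact Set.piecewise_eq_of_notMem _ _ _ hxC

end Valuations

theorem Clause.trueIn_append_iff_of_disjoint {I : Interp} {C D : Clause}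
    (h : Clause.vars C ∩ Clause.vars D = ∅) :
    (C ++ D).trueIn I ↔ C.trueIn I ∨ D.trueIn I := by
  classical
  refine ⟨fun hCD => or_iff_not_imp_left.mpr fun hC ν => ?_, ?_⟩
  · obtain ⟨ν₀, hν₀⟩ := not_forall.mp hC
    have := hCD ((Clause.vars C).piecewise ν₀ ν)
    rw [Clause.holdsUnder_append, Clause.holdsUnder_piecewise_left,
      Clause.holdsUnder_piecewise_right (by simp [h])] at this
    exact this.resolve_left hν₀
  · rintro (hC | hD) ν
    · exact (hC ν).mono fun L hL => List.mem_append_left D hL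
    · exact (hD ν).mono fun L hL => List.mem_append_right C hL

section Inferences

variable {I : Interp}

theorem Clause.trueIn_res {A B : Atom} {D₁ D : Clause} {σ : Subst}
    (hB : Clause.trueIn I (Lit.mkPos B :: D₁)) (hA : Clause.trueIn I (Lit.mkNeg A :: D))
    (hσ : Unifies σ A B) : Clause.trueIn I (Clause.subst σ (D₁ ++ D)) := by
  intro ν
  have hAB := Atom.holds_iff_of_unifies (ν := ν) hσ
  have hB := hB fun x => (σ x).eval I ν
  have hA := hA fun x => (σ x).eval I ν
  simp only [Clause.holdsUnder_cons, Lit.holds_mkPos, Lit.holds_mkNeg] at hA hB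
  rw [Clause.holdsUnder_subst, Clause.holdsUnder_append]
  tauto

theorem Clause.trueIn_fact {A₁ A₂ : Atom} {C : Clause} {σ : Subst}
    (hC : Clause.trueIn I (C ++ [Lit.mkPos A₁, Lit.mkPos A₂])) (hσ : Unifies σ A₁ A₂) :
    Clause.trueIn I (Clause.subst σ (C ++ [Lit.mkPos A₁])) := by
  intro ν
  have hA := Atom.holds_iff_of_unifies (ν := ν) hσ
  have hC := hC fun x => (σ x).eval I ν
  simp only [Clause.holdsUnder_append, Clause.holdsUnder_cons, Lit.holds_mkPos,
    Clause.not_holdsUnder_nil, or_false] at hC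
  rw [Clause.holdsUnder_subst]
  simp only [Clause.holdsUnder_append, Clause.holdsUnder_cons, Lit.holds_mkPos,
    Clause.not_holdsUnder_nil, or_false]
  tauto

theorem TResApp.trueIn_resolvent (t : TResApp) (hside : ∀ i, (t.sidePremise i).trueIn I)
    (hmain : t.mainPremise.trueIn I)
    (hσ : ∀ i : Fin t.n, i.1 < t.m → Unifies t.σ (t.A i) (t.B i)) :
    t.resolvent.trueIn I := by
  intro ν
  set ν' : ℕ → I.dom := fun x => (t.σ x).eval I ν
  rw [resolvent, Clause.holdsUnder_subst, Clause.holdsUnder_append, Clause.holdsUnder_append]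
  obtain ⟨L, hL, hAi⟩ | hD := (Clause.holdsUnder_append _ _).mp (hmain ν')
  · obtain ⟨i, rfl⟩ := List.mem_ofFn.mp hL
    rw [Lit.holds_mkNeg] at hAi
    by_cases him : i.1 < t.m
    · -- `Aᵢ` is false and `Aᵢσ = Bᵢσ`, so the side premise holds through `Dᵢ`
      obtain hBi | ⟨L', hL', hL'ν⟩ := (Clause.holdsUnder_cons _ _).mp (hside i ν')
      · exact absurd ((Atom.holds_iff_of_unifies (hσ i him)).mpr ((Lit.holds_mkPos _).mp hBi)) hAi
      · exact Or.inl (Or.inl ⟨L', List.mem_flatMap.mpr ⟨i, by simp [him], hL'⟩, hL'ν⟩)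
    · refine Or.inl (Or.inr ⟨_, List.mem_map.mpr ⟨i, ?_, rfl⟩, (Lit.holds_mkNeg _).mpr hAi⟩)
      simpa using him
  · exact Or.inr hD

end Inferences

section Satisfiability

variable {N : Set Clause} {C D : Clause}

theorem satisfiable_insert_iff (h : entails N C) : satisfiable (insert C N) ↔ satisfiable N :=
  ⟨fun ⟨I, hI⟩ => ⟨I, fun E hE => hI E (Set.mem_insert_of_mem C hE)⟩,
    fun ⟨I, hI⟩ => ⟨I, Set.forall_mem_insert.mpr ⟨h I hI, hI⟩⟩⟩

theorem satisfiable_sdiff_singleton_iff (hC : C ∈ N) (h : entails (N \ {C}) C) :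
    satisfiable (N \ {C}) ↔ satisfiable N := by
  rw [← satisfiable_insert_iff h, Set.insert_sdiff_singleton, Set.insert_eq_of_mem hC]

theorem satisfiable_insert_condensation_iff (hC : C ∈ N) (hD : IsCondensation D C) :
    satisfiable (insert D (N \ {C})) ↔ satisfiable N := by
  obtain ⟨hDC, hlen, σ, hσ⟩ := hD
  have hne : D ≠ C := fun h => hlen.ne (congrArg List.length h)
  rw [Set.insert_sdiff_singleton_comm hne,
    satisfiable_sdiff_singleton_iff (Set.mem_insert_of_mem D hC), satisfiable_insert_iff]
  · exact fun I hI ν => (Clause.trueIn_subst (hI C hC) σ ν).mono fun L hL => (hσ L).mpr hL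
  · exact fun I hI ν =>
      (hI D ⟨Set.mem_insert D N, hne⟩ ν).mono fun L hL => (Multiset.coe_le.mp hDC).subset hL

theorem satisfiable_iff_of_definitional_split {C' : Clause} {p : ℕ} {xs : List ℕ}
    (hCD : C ++ D ∈ N) (hxs : Clause.vars C ∩ Clause.vars D ⊆ {x | x ∈ xs})
    (hp : p ∉ SetPreds N) (hC' : C'.Perm (Lit.mkNeg ⟨p, xs.map Term.var⟩ :: C)) :
    satisfiable N ↔ satisfiable
      (insert C' (insert (Lit.mkPos ⟨p, xs.map Term.var⟩ :: D) (N \ {C ++ D}))) := by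
  classical
  have hpCD : p ∉ Clause.preds C ∪ Clause.preds D :=
    Clause.preds_append C D ▸ fun h => hp ⟨C ++ D, hCD, h⟩
  obtain ⟨hpC, hpD⟩ := not_or.mp hpCD
  constructor
  · rintro ⟨I, hI⟩
    refine ⟨I.updatePr p fun args => ∀ ν, xs.map ν = args → C.holdsUnder I ν, ?_⟩
    simp only [Interp.models, Set.forall_mem_insert]
    refine ⟨fun ν => ?_, fun ν => ?_, fun E hE => ?_⟩
    · refine Clause.holdsUnder.mono (fun L hL => hC'.symm.subset hL) ?_
      rw [Clause.holdsUnder_cons, Lit.holds_mkNeg, Atom.holds_updatePr_self,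
        Clause.holdsUnder_updatePr _ hpC]
      exact or_iff_not_imp_left.mpr fun h => not_not.mp h ν rfl
    · rw [Clause.holdsUnder_cons, Lit.holds_mkPos, Atom.holds_updatePr_self,
        Clause.holdsUnder_updatePr _ hpD]
      refine or_iff_not_imp_right.mpr fun hD ν' hν' => ?_
      have hagree : ∀ x ∈ Clause.vars C ∩ Clause.vars D, ν' x = ν x :=
        fun x hx => List.map_inj_left.mp hν' x (hxs hx)
      have := hI _ hCD ((Clause.vars C).piecewise ν' ν)
      rw [Clause.holdsUnder_append, Clause.holdsUnder_piecewise_left,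
        Clause.holdsUnder_piecewise_right hagree] at this
      exact this.resolve_right hD
    · exact (Clause.trueIn_updatePr _ fun h => hp ⟨E, hE.1, h⟩).mpr (hI E hE.1)
  · rintro ⟨I, hI⟩
    refine ⟨I, fun E hE => ?_⟩
    by_cases hE' : E = C ++ D
    · subst hE'
      intro ν
      have hneg := (hI C' (Set.mem_insert _ _) ν).mono fun L hL => hC'.subset hL
      have hpos := hI _ (Set.mem_insert_of_mem _ (Set.mem_insert _ _)) ν
      simp only [Clause.holdsUnder_cons, Lit.holds_mkNeg, Lit.holds_mkPos] at hneg hpos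
      rw [Clause.holdsUnder_append]
      tauto
    · exact hI E (Set.mem_insert_of_mem _ (Set.mem_insert_of_mem _ ⟨hE, hE'⟩))

theorem satisfiable_union_append_iff_of_disjoint (h : Clause.vars C ∩ Clause.vars D = ∅) :
    satisfiable (N ∪ {C ++ D}) ↔ satisfiable (N ∪ {C}) ∨ satisfiable (N ∪ {D}) := by
  simp only [satisfiable, Set.union_singleton, Interp.models, Set.forall_mem_insert,
    Clause.trueIn_append_iff_of_disjoint h, or_and_right, exists_or]

end Satisfiability

theorem QARStep.satisfiable_iff {N N' : Set Clause} (h : QARStep N N') :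
    satisfiable N ↔ satisfiable N' := by
  cases h with
  | res hB hA hσ =>
    exact (satisfiable_insert_iff fun I hI => Clause.trueIn_res (hI _ hB) (hI _ hA) hσ.1).symm
  | tres t hside hmain hσ =>
    exact (satisfiable_insert_iff fun I hI =>
      t.trueIn_resolvent (fun i => hI _ (hside i)) (hI _ hmain) hσ).symm
  | fact hC hσ =>
    exact (satisfiable_insert_iff fun I hI => Clause.trueIn_fact (hI _ hC) hσ.1).symm
  | conden hC hD => exact (satisfiable_insert_condensation_iff hC hD).symm
  | deleteTaut hC htaut =>
    exact (satisfiable_sdiff_singleton_iff hC fun I _ => htaut I).symm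
  | deleteVariant hC hC' hne hvar =>
    obtain ⟨ρ, rfl⟩ := hvar.2
    exact (satisfiable_sdiff_singleton_iff hC fun I hI =>
      Clause.trueIn_subst (hI _ ⟨hC', Ne.symm hne⟩) ρ).symm
  | sep hCD _ hxs hp => exact satisfiable_iff_of_definitional_split hCD hxs.ge hp (.refl _)
  | ttrans hFE hxs hp =>
    exact satisfiable_iff_of_definitional_split hFE (hxs ▸ Set.inter_subset_right) hp
      (List.perm_append_singleton _ _)

theorem satisfiable_of_reflTransGen_qarStep {N M : Set Clause}
    (h : Relation.ReflTransGen QARStep N M) (hN : satisfiable N) : satisfiable M := by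
  induction h with
  | refl => exact hN
  | tail _ hstep ih => exact hstep.satisfiable_iff.mp ih

/-- The query answering and rewriting procedure Q-AR is sound:  every
derivation step of Q-AR transforms a clause set into an equisatisfiable clause set
(and Split replaces a clause set by two sets, one of which is equisatisfiable);  in
particular, if Q-AR derives the empty clause from a clause set `N`, then `N` is
unsatisfiable. -/
theorem qar_sound :
    -- every Q-AR derivation step preserves satisfiability in both directions
    (∀ N N' : Set Clause, QARStep N N' → (satisfiable N ↔ satisfiable N')) ∧
    -- soundness of the splitting rule
    (∀ (N : Set Clause) (C D : Clause), C ≠ [] → D ≠ [] →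
        Clause.vars C ∩ Clause.vars D = ∅ →
        (satisfiable (N ∪ {C ++ D}) ↔ (satisfiable (N ∪ {C}) ∨ satisfiable (N ∪ {D})))) ∧
    -- if Q-AR derives the empty clause from N, then N is unsatisfiable
    (∀ N M : Set Clause, Relation.ReflTransGen QARStep N M → ([] : Clause) ∈ M →
        ¬ satisfiable N) := by
  refine ⟨fun _ _ h => h.satisfiable_iff,
    fun _ _ _ _ _ h => satisfiable_union_append_iff_of_disjoint h, fun N M hNM hM hN => ?_⟩
  obtain ⟨I, hI⟩ := satisfiable_of_reflTransGen_qarStep hNM hN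
  exact Clause.not_trueIn_nil (hI [] hM)
end QGF
end

section
/- Let C ∨ D be a clause that is separable into the non-empty subclauses C and D (so Var(C) ⊄ Var(D) and Var(D) ⊄ Var(C)), let x̄ = Var(C) ∩ Var(D), and let d_s be a predicate symbol occurring neither in the clause set N nor in C ∨ D. Then N ∪ {C ∨ D} is satisfiable if and only if N ∪ {¬d_s(x̄) ∨ C, d_s(x̄) ∨ D} is satisfiable. -/
/-!
Common formalization of first-order clausal logic (without equality), following
"Resolution-based query answering and rewriting for the (loosely) guarded fragment".
-/

set_option linter.unusedVariables false

namespace QGF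

theorem eval_congr (I : Interp) : ∀ (t : Term) (ν ν' : ℕ → I.dom),
    (∀ x, t.HasVar x → ν x = ν' x) → Term.eval I ν t = Term.eval I ν' t
  | .var x, ν, ν', h => by
      simp only [Term.eval]; exact h x (.var x)
  | .app hd ts, ν, ν', h => by
      simp only [Term.eval]
      congr 1
      apply List.map_congr_left
      intro a _
      exact eval_congr I a.1 ν ν' (fun x hx => h x (.app a.2 hx))
  decreasing_by
    have := List.sizeOf_lt_of_mem a.2
    simp only [Term.app.sizeOf_spec]
    omega

theorem eval_prIrrel (I : Interp) (p : ℕ → List I.dom → Prop) :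
    ∀ (t : Term) (ν : ℕ → I.dom), Term.eval { I with pr := p } ν t = Term.eval I ν t
  | .var x, ν => by simp only [Term.eval]
  | .app hd ts, ν => by
      simp only [Term.eval]
      congr 1
      apply List.map_congr_left
      intro a _
      exact eval_prIrrel I p a.1 ν
  decreasing_by
    have := List.sizeOf_lt_of_mem a.2
    simp only [Term.app.sizeOf_spec]
    omega

theorem atom_holds_congr (I : Interp) (ν ν' : ℕ → I.dom) (a : Atom)
    (h : ∀ x ∈ a.vars, ν x = ν' x) : a.holds I ν ↔ a.holds I ν' := by
  unfold Atom.holds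
  have : a.args.map (Term.eval I ν) = a.args.map (Term.eval I ν') := by
    apply List.map_congr_left
    intro t ht
    exact eval_congr I t ν ν' (fun x hx => h x ⟨t, ht, hx⟩)
  rw [this]

theorem atom_holds_prIrrel (I : Interp) (p : ℕ → List I.dom → Prop) (a : Atom)
    (hp : p a.pred = I.pr a.pred) (ν : ℕ → I.dom) :
    a.holds { I with pr := p } ν ↔ a.holds I ν := by
  unfold Atom.holds
  have : a.args.map (Term.eval { I with pr := p } ν) = a.args.map (Term.eval I ν) := by
    apply List.map_congr_left
    intro t _
    exact eval_prIrrel I p t ν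
  simp only [this, hp]

theorem lit_holds_congr (I : Interp) (ν ν' : ℕ → I.dom) (L : Lit)
    (h : ∀ x ∈ L.vars, ν x = ν' x) : L.holds I ν ↔ L.holds I ν' := by
  unfold Lit.holds
  have := atom_holds_congr I ν ν' L.atom h
  split <;> tauto

theorem lit_holds_prIrrel (I : Interp) (p : ℕ → List I.dom → Prop) (L : Lit)
    (hp : p L.atom.pred = I.pr L.atom.pred) (ν : ℕ → I.dom) :
    L.holds { I with pr := p } ν ↔ L.holds I ν := by
  unfold Lit.holds
  have := atom_holds_prIrrel I p L.atom hp ν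
  split <;> tauto


/-- Lemma B.6, soundness of the separation rule:  if `C ∨ D` is
separable into the non-empty subclauses `C` and `D`, `x̄ = Var(C) ∩ Var(D)` and `d_s`
is a predicate symbol occurring neither in `N` nor in `C ∨ D`, then `N ∪ {C ∨ D}` is
satisfiable iff `N ∪ {¬d_s(x̄) ∨ C, d_s(x̄) ∨ D}` is satisfiable. -/
theorem sep_equisatisfiable (N : Set Clause) (C D : Clause) (ds : ℕ) (xs : List ℕ)
    (hsep : Separable C D)
    (hxs : {x | x ∈ xs} = Clause.vars C ∩ Clause.vars D)
    (hfresh : ds ∉ SetPreds N ∪ Clause.preds (C ++ D)) :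
    satisfiable (N ∪ {C ++ D}) ↔
      satisfiable (N ∪ {Lit.mkNeg ⟨ds, xs.map Term.var⟩ :: C,
                        Lit.mkPos ⟨ds, xs.map Term.var⟩ :: D}) := by

  classical
  simp only [Set.mem_union, not_or] at hfresh
  obtain ⟨hfN, hfCD⟩ := hfresh
  have hfC : ∀ L ∈ C, L.atom.pred ≠ ds := by
    intro L hL he; exact hfCD ⟨L, by simp [hL], he⟩
  have hfD : ∀ L ∈ D, L.atom.pred ≠ ds := by
    intro L hL he; exact hfCD ⟨L, by simp [hL], he⟩
  constructor
  · rintro ⟨I, hI⟩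
    set pr' : ℕ → List I.dom → Prop := fun p as =>
      if p = ds then (∃ ν : ℕ → I.dom, xs.map ν = as ∧ ¬ Clause.holdsUnder I ν D)
      else I.pr p as with hpr'
    set I' : Interp := { I with pr := pr' } with hI'
    -- d-atom evaluation
    have hdatom : ∀ ν : ℕ → I.dom,
        Atom.holds I' ν ⟨ds, xs.map Term.var⟩ ↔
          ∃ ν' : ℕ → I.dom, xs.map ν' = xs.map ν ∧ ¬ Clause.holdsUnder I ν' D := by
      intro ν
      unfold Atom.holds
      have hargs : (xs.map Term.var).map (Term.eval I' ν) = xs.map ν := by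
        rw [List.map_map]
        apply List.map_congr_left
        intro x _
        simp only [Function.comp, Term.eval]
      simp only [hargs]
      show pr' ds _ ↔ _
      rw [hpr']
      simp
    have hlitIrrel : ∀ (L : Lit), L.atom.pred ≠ ds → ∀ ν,
        (L.holds I' ν ↔ L.holds I ν) := by
      intro L hL ν
      apply lit_holds_prIrrel
      rw [hpr']
      funext as
      simp [hL]
    refine ⟨I', ?_⟩
    intro E hE
    rcases hE with hE | hE
    · -- clauses of N
      intro ν
      obtain ⟨L, hLE, hL⟩ := hI _ (Or.inl hE) ν
      refine ⟨L, hLE, ?_⟩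
      rw [hlitIrrel L ?_ ν]
      · exact hL
      · intro he; exact hfN ⟨E, hE, L, hLE, he⟩
    · rcases hE with hE | hE
      · -- ¬ds(x̄) ∨ C
        subst hE
        intro ν
        by_cases hd : Atom.holds I' ν ⟨ds, xs.map Term.var⟩
        · obtain ⟨ν', hagree, hDfail⟩ := (hdatom ν).mp hd
          have hxsagree : ∀ y ∈ xs, ν' y = ν y := by
            rw [← List.map_eq_map_iff]; exact hagree
          set μ : ℕ → I.dom := fun y => if y ∈ Clause.vars C then ν y else ν' y with hμ
          obtain ⟨L, hLCD, hLholds⟩ := hI (C ++ D) (Or.inr rfl) μ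
          rcases List.mem_append.mp hLCD with hLC | hLD
          · refine ⟨L, by simp [hLC], ?_⟩
            rw [hlitIrrel L (hfC L hLC) ν]
            rw [← lit_holds_congr I μ ν L ?_]
            · exact hLholds
            · intro x hx
              have : x ∈ Clause.vars C := ⟨L, hLC, hx⟩
              simp [hμ, this]
          · exfalso
            apply hDfail
            refine ⟨L, hLD, ?_⟩
            rw [← lit_holds_congr I μ ν' L ?_]
            · exact hLholds
            · intro x hx
              have hxD : x ∈ Clause.vars D := ⟨L, hLD, hx⟩
              by_cases hxC : x ∈ Clause.vars C
              · have : x ∈ xs := by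
                  have : x ∈ ({y | y ∈ xs} : Set ℕ) := by
                    rw [hxs]; exact ⟨hxC, hxD⟩
                  exact this
                simp [hμ, hxC, hxsagree x this]
              · simp [hμ, hxC]
        · refine ⟨Lit.mkNeg ⟨ds, xs.map Term.var⟩, by simp, ?_⟩
          simpa [Lit.holds, Lit.mkNeg] using hd
      · -- ds(x̄) ∨ D
        rw [Set.mem_singleton_iff] at hE
        subst hE
        intro ν
        by_cases hD : Clause.holdsUnder I ν D
        · obtain ⟨L, hLD, hL⟩ := hD
          refine ⟨L, by simp [hLD], ?_⟩
          rw [hlitIrrel L (hfD L hLD) ν]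
          exact hL
        · refine ⟨Lit.mkPos ⟨ds, xs.map Term.var⟩, by simp, ?_⟩
          have : Atom.holds I' ν ⟨ds, xs.map Term.var⟩ := (hdatom ν).mpr ⟨ν, rfl, hD⟩
          simpa [Lit.holds, Lit.mkPos] using this
  · rintro ⟨I, hI⟩
    refine ⟨I, ?_⟩
    intro E hE
    rcases hE with hE | hE
    · exact hI E (Or.inl hE)
    · rw [Set.mem_singleton_iff] at hE
      subst hE
      intro ν
      by_cases hd : Atom.holds I ν ⟨ds, xs.map Term.var⟩
      · obtain ⟨L, hLE, hL⟩ := hI _ (Or.inr (Or.inl rfl)) ν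
        rcases List.mem_cons.mp hLE with h | h
        · exfalso
          rw [h] at hL
          simp [Lit.holds, Lit.mkNeg] at hL
          exact hL hd
        · exact ⟨L, List.mem_append.mpr (Or.inl h), hL⟩
      · obtain ⟨L, hLE, hL⟩ := hI _ (Or.inr (Or.inr rfl)) ν
        rcases List.mem_cons.mp hLE with h | h
        · exfalso
          rw [h] at hL
          simp [Lit.holds, Lit.mkPos] at hL
          exact hd hL
        · exact ⟨L, List.mem_append.mpr (Or.inr h), hL⟩
end QGF
end
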